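/- arXiv:1512.00083 — 2 statements merged into one kernel-verified Lean document; each statement's English description precedes it below -/
import Mathlib

section
/- The following two statements are equivalent: (i) f(n,a) = f(n+1,a) for all positive integers a and n with n ≥ ⌈log₂ a⌉ + 1; (ii) g(n',m) = g(n'+1,m) for all positive integers m and n' with m ≥ 2 and n' ≥ ⌈log₂ m⌉. -/
/-!
For `1 ≤ m ≤ 2ⁿ`, `g(n,m) ≤ a ↔ m ≤ f(n,a)`: deleting a set of minimal size keeps a family
union-closed, so every family can be trimmed to any smaller size without raising degrees.
Since `f` increases and `g` decreases in `n`, this Galois connection carries each statement to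
the other, except when `f(n+1,a) > 2ⁿ` for some `a ≤ 2ⁿ⁻¹`. Then a union-closed family on
`n + 1` points with `2ⁿ + 1` sets and all degrees `≤ 2ⁿ⁻¹` has no singleton, and deleting at
most `n` of its sets lowers every degree below `2ⁿ⁻¹` while more than `2ⁿ - n` sets remain.
But a union-closed family of more than `2ⁿ - n` subsets of `[n]` misses fewer than `n` sets,
and the missing sets cover at most as many points as there are of them, so some point lies in
all `2ⁿ⁻¹` subsets containing it: `g(n,m) ≥ 2ⁿ⁻¹ > g(n+1,m)`.
-/

/-- A family of sets is union-closed if it contains the union of any two of its sets. -/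
def UnionClosed (F : Finset (Finset ℕ)) : Prop :=
  ∀ S ∈ F, ∀ T ∈ F, S ∪ T ∈ F

/-- `F` is a family of subsets of `[n] = {0, …, n-1}` (modeled as `Finset.range n`). -/
def FamilyOn (n : ℕ) (F : Finset (Finset ℕ)) : Prop :=
  ∀ S ∈ F, S ⊆ Finset.range n

/-- The degree of an element `e`: the number of sets of `F` containing `e`. -/
def degOf (F : Finset (Finset ℕ)) (e : ℕ) : ℕ :=
  (F.filter (fun S => e ∈ S)).card

/-- `franklF n a` is the maximum cardinality of a nonempty union-closed family of subsets
of `[n]` in which every element of `[n]` belongs to at most `a` sets. -/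
noncomputable def franklF (n a : ℕ) : ℕ :=
  sSup {m | ∃ F : Finset (Finset ℕ), UnionClosed F ∧ FamilyOn n F ∧ F.Nonempty ∧
    (∀ e ∈ Finset.range n, degOf F e ≤ a) ∧ F.card = m}

/-- `franklG n m` is the minimum, over union-closed families of subsets of `[n]` with
exactly `m` sets, of the maximum degree `max_{e ∈ [n]} |{S ∈ F : e ∈ S}|`. -/
noncomputable def franklG (n m : ℕ) : ℕ :=
  sInf {a | ∃ F : Finset (Finset ℕ), UnionClosed F ∧ FamilyOn n F ∧ F.card = m ∧
    (Finset.range n).sup (degOf F) = a}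

open Finset

theorem card_biUnion_id_le_card {α : Type*} [DecidableEq α] {M : Finset (Finset α)}
    (hM : ∀ x y, x ∪ y ∈ M → x ∈ M ∨ y ∈ M) : (M.biUnion id).card ≤ M.card := by
  have hmin : ∀ i ∈ M.biUnion id, ∃ S ∈ M, i ∈ S ∧ ∀ T ∈ M, i ∈ T → S.card ≤ T.card := by
    intro i hi
    obtain ⟨S, hS, hSmin⟩ :=
      exists_min_image (M.filter (i ∈ ·)) card (by simpa [Finset.Nonempty] using hi)
    rw [mem_filter] at hS
    exact ⟨S, hS.1, hS.2, fun T hT hiT => hSmin T (mem_filter.2 ⟨hT, hiT⟩)⟩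
  choose! φ hφM hφi hφmin using hmin
  refine card_le_card_of_injOn φ (fun i hi => hφM i hi) fun i hi j hj hij => ?_
  by_contra hne
  have hiS : i ∈ φ i := hφi i hi
  have hjS : j ∈ φ i := hij ▸ hφi j hj
  -- `φ i` is the union of its two parts `erase i` and `erase j`, one of which must lie in `M`
  have hS : (φ i).erase i ∪ (φ i).erase j = φ i := by
    ext x
    simp only [mem_union, mem_erase]
    by_cases hx : x = i <;> simp_all
  rcases hM _ _ (hS ▸ hφM i hi) with h | h
  · have hle := hφmin j hj _ h (mem_erase.2 ⟨Ne.symm hne, hjS⟩)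
    rw [← hij] at hle
    exact (card_erase_lt_of_mem hiS).not_ge hle
  · exact (card_erase_lt_of_mem hjS).not_ge (hφmin i hi _ h (mem_erase.2 ⟨hne, hiS⟩))

section Families

variable {n a : ℕ} {F G : Finset (Finset ℕ)}

theorem FamilyOn.mono {k : ℕ} (hF : FamilyOn n F) (h : n ≤ k) : FamilyOn k F :=
  fun S hS => (hF S hS).trans (range_subset_range.2 h)

theorem FamilyOn.subset (hF : FamilyOn n F) (hGF : G ⊆ F) : FamilyOn n G :=
  fun S hS => hF S (hGF hS)

theorem FamilyOn.card_le_two_pow (hF : FamilyOn n F) : F.card ≤ 2 ^ n := by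
  simpa using card_le_card (fun S hS => mem_powerset.2 (hF S hS) : F ⊆ (range n).powerset)

theorem unionClosed_powerset (s : Finset ℕ) : UnionClosed s.powerset :=
  fun _ hS _ hT => mem_powerset.2 (union_subset (mem_powerset.1 hS) (mem_powerset.1 hT))

theorem degOf_mono (h : F ⊆ G) (e : ℕ) : degOf F e ≤ degOf G e :=
  card_le_card (filter_subset_filter _ h)

theorem FamilyOn.degOf_le (hF : FamilyOn n F) (h : ∀ e ∈ range n, degOf F e ≤ a) (e : ℕ) :
    degOf F e ≤ a := by
  by_cases he : e < n
  · exact h e (mem_range.2 he)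
  · have : degOf F e = 0 :=
      card_eq_zero.2 (filter_eq_empty_iff.2 fun S hS heS => he (mem_range.1 (hF S hS heS)))
    omega

theorem degOf_powerset {s : Finset ℕ} {e : ℕ} (he : e ∈ s) :
    degOf s.powerset e = 2 ^ (s.card - 1) := by
  have : s.powerset.filter (e ∈ ·) = (s.erase e).powerset.image (insert e) := by
    ext T
    simp only [mem_filter, mem_powerset, mem_image, subset_erase]
    constructor
    · rintro ⟨hTs, heT⟩
      exact ⟨T.erase e, ⟨(erase_subset e T).trans hTs, notMem_erase e T⟩, insert_erase heT⟩
    · rintro ⟨U, ⟨hUs, -⟩, rfl⟩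
      exact ⟨insert_subset he hUs, mem_insert_self e U⟩
  rw [degOf, this, card_image_of_injOn, card_powerset, card_erase_of_mem he]
  intro U hU V hV hUV
  simp only [coe_powerset, Set.mem_preimage, Set.mem_powerset_iff, coe_subset, subset_erase]
    at hU hV
  rw [← erase_insert hU.2, ← erase_insert hV.2]
  exact congrArg (·.erase e) hUV

theorem degOf_erase_of_mem {v : Finset ℕ} {e : ℕ} (hv : v ∈ F) (he : e ∈ v) :
    degOf (F.erase v) e = degOf F e - 1 := by
  rw [degOf, filter_erase, card_erase_of_mem (mem_filter.2 ⟨hv, he⟩), degOf]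

theorem degOf_erase_of_notMem {v : Finset ℕ} {e : ℕ} (he : e ∉ v) :
    degOf (F.erase v) e = degOf F e := by
  rw [degOf, filter_erase, degOf]
  exact congrArg card (erase_eq_of_notMem fun h => he (mem_filter.1 h).2)

end Families

namespace UnionClosed

variable {n : ℕ} {F : Finset (Finset ℕ)}

theorem exists_unionClosed_erase (hF : UnionClosed F) {p : Finset ℕ → Prop}
    (hp : ∀ T U, p (T ∪ U) → p T ∨ p U) (hne : ∃ v ∈ F, p v) :
    ∃ v ∈ F, p v ∧ UnionClosed (F.erase v) := by
  classical
  -- a `p`-member of minimal size is not the union of two other members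
  obtain ⟨v, hv, hmin⟩ := exists_min_image (F.filter p) card (by simpa [Finset.Nonempty] using hne)
  rw [mem_filter] at hv
  have hsmall : ∀ W ∈ F.erase v, W ⊆ v → ¬ p W := fun W hW hWv hpW =>
    (card_lt_card (hWv.ssubset_of_ne (ne_of_mem_erase hW))).not_ge
      (hmin W (mem_filter.2 ⟨mem_of_mem_erase hW, hpW⟩))
  refine ⟨v, hv.1, hv.2, fun T hT U hU => mem_erase.2 ⟨fun hTU => ?_,
    hF T (mem_of_mem_erase hT) U (mem_of_mem_erase hU)⟩⟩
  rcases hp T U (hTU ▸ hv.2) with h | h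
  · exact hsmall T hT (hTU ▸ subset_union_left) h
  · exact hsmall U hU (hTU ▸ subset_union_right) h

theorem exists_subset_card_eq (hF : UnionClosed F) {m : ℕ} (hm : m ≤ F.card) :
    ∃ G ⊆ F, UnionClosed G ∧ G.card = m := by
  induction F using Finset.strongInduction with
  | H F ih =>
    rcases hm.eq_or_lt with rfl | hlt
    · exact ⟨F, subset_rfl, hF, rfl⟩
    obtain ⟨v, hv, -, hFv⟩ := hF.exists_unionClosed_erase (p := fun _ => True)
      (fun _ _ _ => Or.inl trivial) ((card_pos.1 (by omega)).imp fun v hv => ⟨hv, trivial⟩)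
    obtain ⟨G, hGF, hG, hGm⟩ :=
      ih _ (erase_ssubset hv) hFv (by rw [card_erase_of_mem hv]; omega)
    exact ⟨G, hGF.trans (erase_subset _ _), hG, hGm⟩

theorem exists_subset_degOf_le_pred (hF : UnionClosed F) (e : ℕ) :
    ∃ G ⊆ F, UnionClosed G ∧ F.card ≤ G.card + 1 ∧ degOf G e ≤ degOf F e - 1 := by
  by_cases he : ∃ v ∈ F, e ∈ v
  · obtain ⟨v, hv, hev, hFv⟩ :=
      hF.exists_unionClosed_erase (p := (e ∈ ·)) (fun _ _ => mem_union.1) he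
    exact ⟨F.erase v, erase_subset _ _, hFv, by rw [card_erase_of_mem hv]; omega,
      (degOf_erase_of_mem hv hev).le⟩
  · have : degOf F e = 0 :=
      card_eq_zero.2 (filter_eq_empty_iff.2 fun S hS heS => he ⟨S, hS, heS⟩)
    exact ⟨F, subset_rfl, hF, by omega, by omega⟩

theorem exists_subset_forall_degOf_le_pred (hF : UnionClosed F) (E : Finset ℕ) :
    ∃ G ⊆ F, UnionClosed G ∧ F.card ≤ G.card + E.card ∧ ∀ e ∈ E, degOf G e ≤ degOf F e - 1 := by
  induction E using Finset.induction_on generalizing F with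
  | empty => exact ⟨F, subset_rfl, hF, by simp, by simp⟩
  | insert e E heE ih =>
    obtain ⟨F₁, hF₁F, hF₁, hcard₁, hdeg₁⟩ := hF.exists_subset_degOf_le_pred e
    obtain ⟨G, hGF₁, hG, hcard, hdeg⟩ := ih hF₁
    refine ⟨G, hGF₁.trans hF₁F, hG, by rw [card_insert_of_notMem heE]; omega, fun x hx => ?_⟩
    rcases mem_insert.1 hx with rfl | hx
    · exact (degOf_mono hGF₁ x).trans hdeg₁
    · exact (hdeg x hx).trans (Nat.sub_le_sub_right (degOf_mono hF₁F x) 1)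

theorem card_le_two_mul_degOf (hF : UnionClosed F) {e : ℕ} (he : {e} ∈ F) :
    F.card ≤ 2 * degOf F e := by
  have hinj : (F.filter (e ∉ ·)).card ≤ degOf F e := by
    refine card_le_card_of_injOn (insert e) (fun S hS => ?_) fun S hS T hT hST => ?_
    · rw [mem_coe, mem_filter] at hS ⊢
      rw [insert_eq]
      exact ⟨hF _ he S hS.1, mem_insert_self e S⟩
    · rw [mem_coe, mem_filter] at hS hT
      rw [← erase_insert hS.2, ← erase_insert hT.2]
      exact congrArg (·.erase e) hST
  have := card_filter_add_card_filter_not (s := F) (e ∈ ·)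
  unfold degOf at hinj ⊢
  omega

theorem exists_two_pow_pred_le_degOf (hF : UnionClosed F) (hOn : FamilyOn n F)
    (hcard : 2 ^ n < F.card + n) : ∃ e ∈ range n, 2 ^ (n - 1) ≤ degOf F e := by
  have hFP : F ⊆ (range n).powerset := fun S hS => mem_powerset.2 (hOn S hS)
  set M := (range n).powerset \ F
  have hM : ∀ x y, x ∪ y ∈ M → x ∈ M ∨ y ∈ M := by
    intro x y hxy
    simp only [M, mem_sdiff, mem_powerset, union_subset_iff] at hxy ⊢
    by_contra! h
    exact hxy.2 (hF x (h.1 hxy.1.1) y (h.2 hxy.1.2))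
  have hMcard : M.card < (range n).card := by
    rw [card_sdiff_of_subset hFP, card_powerset, card_range]
    have := hOn.card_le_two_pow
    omega
  obtain ⟨e, hen, heM⟩ :=
    exists_mem_notMem_of_card_lt_card ((card_biUnion_id_le_card hM).trans_lt hMcard)
  refine ⟨e, hen, ?_⟩
  calc 2 ^ (n - 1) = degOf (range n).powerset e := by rw [degOf_powerset hen, card_range]
    _ ≤ degOf F e := by
      refine card_le_card fun S hS => ?_
      rw [mem_filter] at hS ⊢
      refine ⟨?_, hS.2⟩
      by_contra hSF
      exact heM (mem_biUnion.2 ⟨S, mem_sdiff.2 ⟨hS.1, hSF⟩, hS.2⟩)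

end UnionClosed

section Extremal

variable {n a m : ℕ} {F : Finset (Finset ℕ)}

theorem le_franklF (hF : UnionClosed F) (hOn : FamilyOn n F) (hne : F.Nonempty)
    (hdeg : ∀ e ∈ range n, degOf F e ≤ a) : F.card ≤ franklF n a :=
  le_csSup ⟨2 ^ n, by rintro _ ⟨G, -, hG, -, -, rfl⟩; exact hG.card_le_two_pow⟩
    ⟨F, hF, hOn, hne, hdeg, rfl⟩

theorem exists_card_eq_franklF (n a : ℕ) : ∃ F, UnionClosed F ∧ FamilyOn n F ∧ F.Nonempty ∧
    (∀ e ∈ range n, degOf F e ≤ a) ∧ F.card = franklF n a := by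
  obtain ⟨F, h⟩ : franklF n a ∈ _ := by
    unfold franklF
    exact Nat.sSup_mem ⟨1, {∅}, by simp [UnionClosed], by simp [FamilyOn], singleton_nonempty ∅,
        by simp [degOf, filter_singleton], rfl⟩
      ⟨2 ^ n, by rintro _ ⟨G, -, hG, -, -, rfl⟩; exact hG.card_le_two_pow⟩
  exact ⟨F, h⟩

theorem one_le_franklF (n a : ℕ) : 1 ≤ franklF n a := by
  obtain ⟨F, -, -, hne, -, hcard⟩ := exists_card_eq_franklF n a
  exact hcard ▸ hne.card_pos

theorem exists_card_eq_of_le_franklF (hm : m ≤ franklF n a) : ∃ G, UnionClosed G ∧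
    FamilyOn n G ∧ G.card = m ∧ ∀ e ∈ range n, degOf G e ≤ a := by
  obtain ⟨F, hF, hOn, -, hdeg, hcard⟩ := exists_card_eq_franklF n a
  obtain ⟨G, hGF, hG, rfl⟩ := hF.exists_subset_card_eq (hcard ▸ hm)
  exact ⟨G, hG, hOn.subset hGF, rfl, fun e he => (degOf_mono hGF e).trans (hdeg e he)⟩

theorem franklF_le_franklF_succ (n a : ℕ) : franklF n a ≤ franklF (n + 1) a := by
  obtain ⟨F, hF, hOn, hne, hdeg, hcard⟩ := exists_card_eq_franklF n a
  exact hcard ▸ le_franklF hF (hOn.mono n.le_succ) hne fun e _ => hOn.degOf_le hdeg e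

theorem franklG_card_le (hF : UnionClosed F) (hOn : FamilyOn n F)
    (hdeg : ∀ e ∈ range n, degOf F e ≤ a) : franklG n F.card ≤ a := by
  unfold franklG
  exact le_trans (Nat.sInf_le ⟨F, hF, hOn, rfl, rfl⟩) (Finset.sup_le hdeg)

theorem exists_card_eq_degOf_le_two_pow (hm : m ≤ 2 ^ n) : ∃ F, UnionClosed F ∧
    FamilyOn n F ∧ F.card = m ∧ ∀ e ∈ range n, degOf F e ≤ 2 ^ (n - 1) := by
  obtain ⟨F, hFP, hF, hcard⟩ := (unionClosed_powerset (range n)).exists_subset_card_eq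
    (m := m) (by simpa using hm)
  refine ⟨F, hF, fun S hS => mem_powerset.1 (hFP hS), hcard, fun e he => ?_⟩
  simpa [degOf_powerset he] using degOf_mono hFP e

theorem exists_card_eq_franklG (hm : m ≤ 2 ^ n) : ∃ F, UnionClosed F ∧ FamilyOn n F ∧
    F.card = m ∧ ∀ e ∈ range n, degOf F e ≤ franklG n m := by
  obtain ⟨F, hF, hOn, hcard, -⟩ := exists_card_eq_degOf_le_two_pow hm
  obtain ⟨G, hG, hGOn, hGcard, hsup⟩ : franklG n m ∈ _ := by
    unfold franklG
    exact Nat.sInf_mem ⟨_, F, hF, hOn, hcard, rfl⟩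
  exact ⟨G, hG, hGOn, hGcard, fun e he => hsup ▸ le_sup he⟩

theorem franklG_le_two_pow (hm : m ≤ 2 ^ n) : franklG n m ≤ 2 ^ (n - 1) := by
  obtain ⟨F, hF, hOn, rfl, hdeg⟩ := exists_card_eq_degOf_le_two_pow hm
  exact franklG_card_le hF hOn hdeg

theorem franklG_succ_le_franklG (hm : m ≤ 2 ^ n) : franklG (n + 1) m ≤ franklG n m := by
  obtain ⟨F, hF, hOn, rfl, hdeg⟩ := exists_card_eq_franklG hm
  exact franklG_card_le hF (hOn.mono n.le_succ) fun e _ => hOn.degOf_le hdeg e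

theorem franklG_pos (hm : 2 ≤ m) (hmn : m ≤ 2 ^ n) : 0 < franklG n m := by
  obtain ⟨F, hF, hOn, rfl, hdeg⟩ := exists_card_eq_franklG hmn
  obtain ⟨U, hU, hUne⟩ := exists_mem_ne hm ∅
  obtain ⟨e, he⟩ := nonempty_iff_ne_empty.2 hUne
  exact (card_pos.2 ⟨U, mem_filter.2 ⟨hU, he⟩⟩).trans_le (hdeg e (hOn U hU he))

theorem franklG_le_iff (hm : 0 < m) (hmn : m ≤ 2 ^ n) : franklG n m ≤ a ↔ m ≤ franklF n a := by
  constructor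
  · intro h
    obtain ⟨F, hF, hOn, rfl, hdeg⟩ := exists_card_eq_franklG hmn
    exact le_franklF hF hOn (card_pos.1 hm) fun e he => (hdeg e he).trans h
  · intro h
    obtain ⟨G, hG, hOn, rfl, hdeg⟩ := exists_card_eq_of_le_franklF h
    exact franklG_card_le hG hOn hdeg

theorem two_pow_pred_le_franklG (hm : 2 ^ n < m + n) (hmn : m ≤ 2 ^ n) :
    2 ^ (n - 1) ≤ franklG n m := by
  obtain ⟨F, hF, hOn, rfl, hdeg⟩ := exists_card_eq_franklG hmn
  obtain ⟨e, he, hle⟩ := hF.exists_two_pow_pred_le_degOf hOn hm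
  exact hle.trans (hdeg e he)

end Extremal

theorem exists_franklG_succ_lt_franklG {n : ℕ} (hn : 0 < n) {G : Finset (Finset ℕ)}
    (hG : UnionClosed G) (hOn : FamilyOn (n + 1) G) (hcard : G.card = 2 ^ n + 1)
    (hdeg : ∀ e ∈ range (n + 1), degOf G e ≤ 2 ^ (n - 1)) :
    ∃ m, 2 ≤ m ∧ m ≤ 2 ^ n ∧ franklG (n + 1) m < franklG n m := by
  have hpow : 2 ^ n = 2 * 2 ^ (n - 1) := by rw [← pow_succ']; congr 1; omega
  have hpos : 0 < 2 ^ (n - 1) := by positivity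
  have hsing : ∀ e, {e} ∉ G := fun e he => by
    have := hG.card_le_two_mul_degOf he
    have := hdeg e (hOn _ he (mem_singleton_self e))
    omega
  obtain ⟨v, hvG, hv, hG₁⟩ := hG.exists_unionClosed_erase (p := Finset.Nonempty)
    (fun _ _ => union_nonempty.1)
    ((exists_mem_ne (by omega) ∅).imp fun _ h => ⟨h.1, nonempty_iff_ne_empty.2 h.2⟩)
  have hv2 : 2 ≤ v.card := by
    by_contra! h
    obtain ⟨x, rfl⟩ := (card_eq_one (s := v)).1 (by have := hv.card_pos; omega)
    exact hsing x hvG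
  -- `v` already lowers two degrees, so at most `n - 1` further deletions are needed
  obtain ⟨G', hG'G, hG', hcard', hdeg'⟩ :=
    hG₁.exists_subset_forall_degOf_le_pred (range (n + 1) \ v)
  rw [card_erase_of_mem hvG, card_sdiff_of_subset (hOn v hvG), card_range] at hcard'
  have hG'n : G'.card ≤ 2 ^ n := (card_le_card hG'G).trans (by rw [card_erase_of_mem hvG]; omega)
  have hlow := two_pow_pred_le_franklG (m := G'.card) (by omega) hG'n
  have hup : franklG (n + 1) G'.card ≤ 2 ^ (n - 1) - 1 := by
    refine franklG_card_le hG' (hOn.subset (hG'G.trans (erase_subset _ _))) fun e he => ?_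
    have hle : degOf G' e ≤ degOf G e - 1 := by
      by_cases hev : e ∈ v
      · exact (degOf_mono hG'G e).trans (degOf_erase_of_mem hvG hev).le
      · rw [← degOf_erase_of_notMem (F := G) hev]
        exact hdeg' e (mem_sdiff.2 ⟨he, hev⟩)
    have := hdeg e he
    omega
  exact ⟨G'.card, by have := @Nat.lt_two_pow_self n; omega, hG'n, by omega⟩

theorem franklG_eq_franklG_succ {n m : ℕ}
    (hf : ∀ a, 0 < a → a ≤ 2 ^ (n - 1) → franklF n a = franklF (n + 1) a)
    (hm : 2 ≤ m) (hmn : m ≤ 2 ^ n) : franklG n m = franklG (n + 1) m := by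
  have hmn' : m ≤ 2 ^ (n + 1) := hmn.trans (Nat.pow_le_pow_right two_pos n.le_succ)
  set a := franklG (n + 1) m
  have ha : a ≤ 2 ^ (n - 1) := (franklG_succ_le_franklG hmn).trans (franklG_le_two_pow hmn)
  have hma : m ≤ franklF n a :=
    hf a (franklG_pos hm hmn') ha ▸ (franklG_le_iff (by omega) hmn').1 le_rfl
  exact le_antisymm ((franklG_le_iff (by omega) hmn).2 hma) (franklG_succ_le_franklG hmn)

theorem franklF_eq_franklF_succ {n a : ℕ}
    (hg : ∀ m, 2 ≤ m → m ≤ 2 ^ n → franklG n m = franklG (n + 1) m)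
    (hn : 0 < n) (ha : a ≤ 2 ^ (n - 1)) : franklF n a = franklF (n + 1) a := by
  refine le_antisymm (franklF_le_franklF_succ n a) ?_
  have hle : franklF (n + 1) a ≤ 2 ^ n := by
    by_contra! h
    obtain ⟨G, hG, hOn, hcard, hdeg⟩ := exists_card_eq_of_le_franklF h
    obtain ⟨m, hm, hmn, hlt⟩ :=
      exists_franklG_succ_lt_franklG hn hG hOn hcard fun e he => (hdeg e he).trans ha
    exact hlt.ne (hg m hm hmn).symm
  set m := franklF (n + 1) a
  rcases Nat.lt_or_ge m 2 with hm | hm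
  · exact (by omega : m ≤ 1).trans (one_le_franklF n a)
  · have hm' : m ≤ 2 ^ (n + 1) := hle.trans (Nat.pow_le_pow_right two_pos n.le_succ)
    exact (franklG_le_iff (by omega) hle).1
      (hg m hm hle ▸ (franklG_le_iff (by omega) hm').2 le_rfl)

/-- The `f`-conjecture and the `g`-conjecture are equivalent:
`f(n,a) = f(n+1,a)` for all positive `a, n` with `n ≥ ⌈log₂ a⌉ + 1` if and only if
`g(n',m) = g(n'+1,m)` for all positive `m, n'` with `m ≥ 2` and `n' ≥ ⌈log₂ m⌉`. -/
theorem franklF_conj_iff_franklG_conj :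
    (∀ a n : ℕ, 0 < a → 0 < n → Nat.clog 2 a + 1 ≤ n →
      franklF n a = franklF (n + 1) a) ↔
    (∀ m n' : ℕ, 2 ≤ m → 0 < n' → Nat.clog 2 m ≤ n' →
      franklG n' m = franklG (n' + 1) m) := by
  have hclog {x k : ℕ} : Nat.clog 2 x ≤ k ↔ x ≤ 2 ^ k := Nat.clog_le_iff_le_pow one_lt_two
  constructor
  · intro hf m n hm hn hmn
    refine franklG_eq_franklG_succ (fun a ha han => hf a n ha hn ?_) hm (hclog.1 hmn)
    have := hclog.2 han
    omega
  · intro hg a n _ hn han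
    exact franklF_eq_franklF_succ (fun m hm hmn => hg m n hm hn (hclog.2 hmn)) hn
      (hclog.1 (by omega))
end

section
/- Let a and n be positive integers with a ≤ 2^{n-1}, and suppose there exists at least one union-closed family of subsets of [n] in which every element lies in at most a sets and every element of [n] is a non-trivial twin difference. Then g_t(n, f_t(n,a)) = a. -/
/-- The number of twin pairs with twin difference `e`: sets `S ∈ F` with `e ∉ S`
and `S ∪ {e} ∈ F`. -/
def twinCount (F : Finset (Finset ℕ)) (e : ℕ) : ℕ :=
  (F.filter (fun S => e ∉ S ∧ insert e S ∈ F)).card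

/-- `e` is a non-trivial twin difference in `F` (as a family of subsets of `[n]`):
there is `S ∈ F` with `e ∉ S`, `S ∪ {e} ∈ F` and `S ∪ {e} ≠ [n]`. -/
def NonTrivialTwinDiff (n : ℕ) (F : Finset (Finset ℕ)) (e : ℕ) : Prop :=
  ∃ S ∈ F, e ∉ S ∧ insert e S ∈ F ∧ insert e S ≠ Finset.range n

/-- `franklFt n a`: maximum cardinality of a union-closed family of subsets of `[n]`
where every element of `[n]` lies in at most `a` sets and every element of `[n]` is a
non-trivial twin difference. -/
noncomputable def franklFt (n a : ℕ) : ℕ :=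
  sSup {m | ∃ F : Finset (Finset ℕ), UnionClosed F ∧ FamilyOn n F ∧
    (∀ e ∈ Finset.range n, degOf F e ≤ a) ∧
    (∀ e ∈ Finset.range n, NonTrivialTwinDiff n F e) ∧ F.card = m}

/-- `franklGt n m`: minimum of the maximum degree over union-closed families of subsets
of `[n]` with exactly `m` sets in which every element of `[n]` is a non-trivial twin
difference. -/
noncomputable def franklGt (n m : ℕ) : ℕ :=
  sInf {a | ∃ F : Finset (Finset ℕ), UnionClosed F ∧ FamilyOn n F ∧ F.card = m ∧
    (∀ e ∈ Finset.range n, NonTrivialTwinDiff n F e) ∧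
    (Finset.range n).sup (degOf F) = a}

/-
The family attaining `f_t(n,a)` shows `g_t(n, f_t(n,a)) ≤ a`. Conversely, a family `G` with
`f_t(n,a)` sets, all of `[n]` as twin differences and all degrees `< a ≤ 2^(n-1)` must miss a
subset of `[n]`, since in the full power set every element has degree `2^(n-1)`. Adding a maximal
missing set `T` keeps `G` union-closed (each `T ∪ S` is `T` or a strict superset of `T`, hence
already in `G`), raises every degree by at most one and keeps all twin pairs, so it gives an
admissible family with `f_t(n,a) + 1` sets.
-/

open Finset

lemma degOf_insert_le (T : Finset ℕ) (G : Finset (Finset ℕ)) (e : ℕ) :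
    degOf (insert T G) e ≤ degOf G e + 1 := by
  unfold degOf
  rw [filter_insert]
  split
  · exact card_insert_le _ _
  · exact Nat.le_succ _

lemma two_pow_le_degOf_of_powerset_subset {s : Finset ℕ} {e : ℕ} (he : e ∈ s)
    {G : Finset (Finset ℕ)} (h : s.powerset ⊆ G) : 2 ^ (s.card - 1) ≤ degOf G e := by
  rw [← card_erase_of_mem he, ← card_powerset]
  refine card_le_card_of_injOn (insert e) (fun S hS => ?_) (insert_erase_invOn.2.injOn.mono ?_)
  · rw [mem_coe, mem_powerset] at hS
    exact mem_filter.2 ⟨h (mem_powerset.2 (insert_subset he (hS.trans (erase_subset _ _)))),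
      mem_insert_self _ _⟩
  · intro S hS
    exact notMem_mono (mem_powerset.1 hS) (notMem_erase e s)

lemma FamilyOn.insert {n : ℕ} {G : Finset (Finset ℕ)} (hG : FamilyOn n G) {T : Finset ℕ}
    (hT : T ⊆ range n) : FamilyOn n (insert T G) := by
  intro S hS
  rcases mem_insert.1 hS with rfl | hS
  exacts [hT, hG S hS]

lemma NonTrivialTwinDiff.mono {n e : ℕ} {F G : Finset (Finset ℕ)} (h : F ⊆ G)
    (hF : NonTrivialTwinDiff n F e) : NonTrivialTwinDiff n G e := by
  obtain ⟨S, hS, heS, hins, hne⟩ := hF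
  exact ⟨S, h hS, heS, h hins, hne⟩

lemma UnionClosed.insert_of_ssuperset_mem {n : ℕ} {G : Finset (Finset ℕ)} (hu : UnionClosed G)
    (hf : FamilyOn n G) {T : Finset ℕ} (hT : T ⊆ range n)
    (hsup : ∀ U, T ⊂ U → U ⊆ range n → U ∈ G) : UnionClosed (insert T G) := by
  have hTS : ∀ S ∈ G, T ∪ S ∈ insert T G := fun S hS => by
    rcases (subset_union_left : T ⊆ T ∪ S).eq_or_ssubset with h | h
    · rw [← h]; exact mem_insert_self _ _
    · exact mem_insert_of_mem (hsup _ h (union_subset hT (hf S hS)))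
  intro S hS S' hS'
  rcases mem_insert.1 hS with hST | hS <;> rcases mem_insert.1 hS' with hS'T | hS'
  · rw [hST, hS'T, union_self]; exact mem_insert_self _ _
  · rw [hST]; exact hTS S' hS'
  · rw [hS'T, union_comm]; exact hTS S hS
  · exact mem_insert_of_mem (hu S hS S' hS')

lemma exists_unionClosed_insert {n : ℕ} {G : Finset (Finset ℕ)} (hu : UnionClosed G)
    (hf : FamilyOn n G) (hmiss : ¬ (range n).powerset ⊆ G) :
    ∃ T ⊆ range n, T ∉ G ∧ UnionClosed (insert T G) := by
  obtain ⟨T, hTmax⟩ := exists_maximal (sdiff_nonempty.2 hmiss)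
  obtain ⟨hTn, hTG⟩ := mem_sdiff.1 hTmax.1
  have hTsub := mem_powerset.1 hTn
  refine ⟨T, hTsub, hTG, hu.insert_of_ssuperset_mem hf hTsub fun U hTU hU => ?_⟩
  by_contra hUG
  exact hTU.not_subset (hTmax.2 (mem_sdiff.2 ⟨mem_powerset.2 hU, hUG⟩) hTU.subset)

lemma FamilyOn.card_le {n : ℕ} {F : Finset (Finset ℕ)} (hf : FamilyOn n F) :
    F.card ≤ 2 ^ n := by
  simpa only [card_powerset, card_range] using
    card_le_card fun S hS => mem_powerset.2 (hf S hS)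

lemma card_le_franklFt {n a : ℕ} {F : Finset (Finset ℕ)} (hu : UnionClosed F)
    (hf : FamilyOn n F) (hd : ∀ e ∈ range n, degOf F e ≤ a)
    (ht : ∀ e ∈ range n, NonTrivialTwinDiff n F e) : F.card ≤ franklFt n a := by
  unfold franklFt
  refine le_csSup ⟨2 ^ n, ?_⟩ ⟨F, hu, hf, hd, ht, rfl⟩
  rintro _ ⟨G, -, hG, -, -, rfl⟩
  exact hG.card_le

lemma franklFt_mem {n a : ℕ}
    (hex : ∃ F : Finset (Finset ℕ), UnionClosed F ∧ FamilyOn n F ∧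
      (∀ e ∈ range n, degOf F e ≤ a) ∧ (∀ e ∈ range n, NonTrivialTwinDiff n F e)) :
    franklFt n a ∈ {m | ∃ F : Finset (Finset ℕ), UnionClosed F ∧ FamilyOn n F ∧
      (∀ e ∈ range n, degOf F e ≤ a) ∧ (∀ e ∈ range n, NonTrivialTwinDiff n F e) ∧
      F.card = m} := by
  obtain ⟨F, hu, hf, hd, ht⟩ := hex
  refine Nat.sSup_mem ⟨F.card, F, hu, hf, hd, ht, rfl⟩ ⟨2 ^ n, ?_⟩
  rintro _ ⟨G, -, hG, -, -, rfl⟩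
  exact hG.card_le

lemma franklGt_le {n : ℕ} {F : Finset (Finset ℕ)} (hu : UnionClosed F) (hf : FamilyOn n F)
    (ht : ∀ e ∈ range n, NonTrivialTwinDiff n F e) :
    franklGt n F.card ≤ (range n).sup (degOf F) := by
  unfold franklGt
  exact Nat.sInf_le ⟨F, hu, hf, rfl, ht, rfl⟩

lemma franklGt_mem {n : ℕ} {F : Finset (Finset ℕ)} (hu : UnionClosed F)
    (hf : FamilyOn n F) (ht : ∀ e ∈ range n, NonTrivialTwinDiff n F e) :
    franklGt n F.card ∈ {b | ∃ G : Finset (Finset ℕ), UnionClosed G ∧ FamilyOn n G ∧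
      G.card = F.card ∧ (∀ e ∈ range n, NonTrivialTwinDiff n G e) ∧
      (range n).sup (degOf G) = b} :=
  Nat.sInf_mem ⟨_, F, hu, hf, rfl, ht, rfl⟩

theorem franklGt_franklFt_general (a n : ℕ) (hn : 0 < n)
    (hpow : a ≤ 2 ^ (n - 1))
    (hex : ∃ F : Finset (Finset ℕ), UnionClosed F ∧ FamilyOn n F ∧
      (∀ e ∈ Finset.range n, degOf F e ≤ a) ∧
      (∀ e ∈ Finset.range n, NonTrivialTwinDiff n F e)) :
    franklGt n (franklFt n a) = a := by
  obtain ⟨F, hu, hf, hd, ht, hcard⟩ := franklFt_mem hex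
  rw [← hcard]
  refine le_antisymm ((franklGt_le hu hf ht).trans (Finset.sup_le hd)) (not_lt.1 fun hlt => ?_)
  obtain ⟨G, huG, hfG, hcG, htG, hsup⟩ := franklGt_mem hu hf ht
  have hdG : ∀ e ∈ range n, degOf G e < a := fun e he => (hsup ▸ le_sup he).trans_lt hlt
  have hmiss : ¬ (range n).powerset ⊆ G := fun h => by
    have h0 := two_pow_le_degOf_of_powerset_subset (mem_range.2 hn) h
    rw [card_range] at h0
    exact (hpow.trans h0).not_gt (hdG 0 (mem_range.2 hn))
  obtain ⟨T, hT, hTG, huT⟩ := exists_unionClosed_insert huG hfG hmiss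
  have hcardT := card_le_franklFt huT (hfG.insert hT)
    (fun e he => (degOf_insert_le T G e).trans (hdG e he))
    (fun e he => (htG e he).mono (subset_insert T G))
  rw [card_insert_of_notMem hTG, hcG, hcard] at hcardT
  exact Nat.lt_irrefl _ hcardT

/-- `g_t(n, f_t(n,a)) = a` whenever `a ≤ 2^(n-1)` and `f_t(n,a)` is defined. -/
theorem franklGt_franklFt (a n : ℕ) (ha : 0 < a) (hn : 0 < n)
    (hpow : a ≤ 2 ^ (n - 1))
    (hex : ∃ F : Finset (Finset ℕ), UnionClosed F ∧ FamilyOn n F ∧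
      (∀ e ∈ Finset.range n, degOf F e ≤ a) ∧
      (∀ e ∈ Finset.range n, NonTrivialTwinDiff n F e)) :
    franklGt n (franklFt n a) = a :=
  franklGt_franklFt_general a n hn hpow hex
end
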